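/- Let d = 3 and let p ≥ q ≥ r > 0 with n = p + q + r. For all partitions λ of n, μ of p, ν of q, ζ of r, each with at most 3 rows and with μ, ν, ζ subpartitions of λ, the quantity Ξ(λ,μ,ν,ζ) = 2(n(p+q) - p² - pq - q²) - 2Σ(λ) + Σ(μ) + Σ(ν) + Σ(ζ) is at most 2n(2 + p + q) - 2(p² + q + q² + p(2 + q)). -/

import Mathlib

/-!
After cancelling the part that is polynomial in `p` and `q`, the claim is
`S3 μ + S3 ν + S3 ζ ≤ 2 S3 λ + 2q + 4r`. Doubled, to clear the integer division in `S3`, this is a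
quadratic inequality in the twelve row lengths with a Positivstellensatz-type certificate: a
nonnegative combination of products of the linear constraints and of the one integrality fact
`(λ₃ - ζ₃ - 1)(λ₃ - ζ₃ - 2) ≥ 0`. The bound is sharp: equality holds for `λ = (1,1,1)`,
`μ = ν = ζ = (1)` and for `λ = (2,2,2)`, `μ = (2,2)`, `ν = ζ = (1)`.
-/

/-- Content sum of a three-row partition `(a, b, c)` with `a ≥ b ≥ c ≥ 0`. -/
def S3 (a b c : ℕ) : ℤ :=
  (a : ℤ) * ((a : ℤ) - 1) / 2 + ((b : ℤ) * ((b : ℤ) - 1) / 2 - (b : ℤ))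
    + ((c : ℤ) * ((c : ℤ) - 1) / 2 - 2 * (c : ℤ))

def twiceS3 (a b c : ℤ) : ℤ :=
  a * (a - 1) + (b * (b - 1) - 2 * b) + (c * (c - 1) - 4 * c)

theorem two_mul_S3 (a b c : ℕ) : 2 * S3 a b c = twiceS3 a b c := by
  have h (x : ℤ) : 2 * (x * (x - 1) / 2) = x * (x - 1) :=
    Int.two_mul_ediv_two_of_even (Int.even_mul_pred_self x)
  rw [S3, twiceS3]
  linear_combination h a + h b + h c

theorem Int.mul_pred_self_nonneg (x : ℤ) : 0 ≤ x * (x - 1) := by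
  rcases le_or_gt x 0 with h | h
  · exact mul_nonneg_of_nonpos_of_nonpos h (by omega)
  · exact mul_nonneg h.le (by omega)

theorem twiceS3_add_twiceS3_add_twiceS3_le {l1 l2 l3 m1 m2 m3 n1 n2 n3 z1 z2 z3 : ℤ}
    (hl3 : l3 ≤ l2) (hl2 : l2 ≤ l1) (hm3 : m3 ≤ m2) (hm2 : m2 ≤ m1)
    (hn3 : n3 ≤ n2) (hn2 : n2 ≤ n1) (hz3 : z3 ≤ z2) (hz2 : z2 ≤ z1)
    (hm0 : 0 ≤ m3) (hn0 : 0 ≤ n3) (hz0 : 0 ≤ z3)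
    (hsum : l1 + l2 + l3 = m1 + m2 + m3 + (n1 + n2 + n3) + (z1 + z2 + z3))
    (hml : m1 ≤ l1) (hnl : n1 ≤ l1) (hzpos : 0 < z1 + z2 + z3)
    (hzn : z1 + z2 + z3 ≤ n1 + n2 + n3) :
    twiceS3 m1 m2 m3 + twiceS3 n1 n2 n3 + twiceS3 z1 z2 z3 ≤
      2 * twiceS3 l1 l2 l3 + 4 * (n1 + n2 + n3) + 8 * (z1 + z2 + z3) := by
  unfold twiceS3
  nlinarith [Int.mul_pred_self_nonneg (l3 - z3 - 1)]

theorem S3_add_S3_add_S3_le {l1 l2 l3 m1 m2 m3 n1 n2 n3 z1 z2 z3 : ℕ}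
    (hl : l3 ≤ l2 ∧ l2 ≤ l1) (hm : m3 ≤ m2 ∧ m2 ≤ m1) (hn : n3 ≤ n2 ∧ n2 ≤ n1)
    (hz : z3 ≤ z2 ∧ z2 ≤ z1)
    (hsum : l1 + l2 + l3 = m1 + m2 + m3 + (n1 + n2 + n3) + (z1 + z2 + z3))
    (hml : m1 ≤ l1) (hnl : n1 ≤ l1) (hzpos : 0 < z1 + z2 + z3)
    (hzn : z1 + z2 + z3 ≤ n1 + n2 + n3) :
    S3 m1 m2 m3 + S3 n1 n2 n3 + S3 z1 z2 z3 ≤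
      2 * S3 l1 l2 l3 + 2 * ((n1 + n2 + n3 : ℕ) : ℤ) + 4 * ((z1 + z2 + z3 : ℕ) : ℤ) := by
  zify at hl hm hn hz hsum hml hnl hzpos hzn
  have key := twiceS3_add_twiceS3_add_twiceS3_le hl.1 hl.2 hm.1 hm.2 hn.1 hn.2 hz.1 hz.2
    (Nat.cast_nonneg m3) (Nat.cast_nonneg n3) (Nat.cast_nonneg z3) hsum hml hnl hzpos hzn
  push_cast
  linarith [two_mul_S3 l1 l2 l3, two_mul_S3 m1 m2 m3, two_mul_S3 n1 n2 n3, two_mul_S3 z1 z2 z3]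

theorem Xi_max_d3_general (p q r : ℕ) (hr : 0 < r) (hqr : r ≤ q)
    (l1 l2 l3 m1 m2 m3 n1 n2 n3 z1 z2 z3 : ℕ)
    (hl : l3 ≤ l2 ∧ l2 ≤ l1) (hlsum : l1 + l2 + l3 = p + q + r)
    (hm : m3 ≤ m2 ∧ m2 ≤ m1) (hmsum : m1 + m2 + m3 = p)
    (hn : n3 ≤ n2 ∧ n2 ≤ n1) (hnsum : n1 + n2 + n3 = q)
    (hz : z3 ≤ z2 ∧ z2 ≤ z1) (hzsum : z1 + z2 + z3 = r)
    (hmsub : m1 ≤ l1 ∧ m2 ≤ l2 ∧ m3 ≤ l3)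
    (hnsub : n1 ≤ l1 ∧ n2 ≤ l2 ∧ n3 ≤ l3) :
    2 * (((p + q + r : ℕ) : ℤ) * ((p : ℤ) + q) - (p : ℤ) ^ 2 - (p : ℤ) * q - (q : ℤ) ^ 2)
        - 2 * S3 l1 l2 l3 + S3 m1 m2 m3 + S3 n1 n2 n3 + S3 z1 z2 z3 ≤
      2 * ((p + q + r : ℕ) : ℤ) * (2 + (p : ℤ) + q)
        - 2 * ((p : ℤ) ^ 2 + q + (q : ℤ) ^ 2 + (p : ℤ) * (2 + q)) := by
  subst hmsum hnsum hzsum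
  have key := S3_add_S3_add_S3_le hl hm hn hz hlsum hmsub.1 hnsub.1 hr hqr
  push_cast at key ⊢
  linarith

/-- For `p ≥ q ≥ r > 0`, `n = p + q + r`: over all partitions with at most 3 rows,
`λ ⊢ n`, `μ ⊢ p`, `ν ⊢ q`, `ζ ⊢ r` with `μ,ν,ζ` subpartitions of `λ`,
`Ξ(λ,μ,ν,ζ) ≤ 2n(2+p+q) - 2(p² + q + q² + p(2+q))`. -/
theorem Xi_max_d3 (p q r : ℕ) (hr : 0 < r) (hqr : r ≤ q) (hpq : q ≤ p)
    (l1 l2 l3 m1 m2 m3 n1 n2 n3 z1 z2 z3 : ℕ)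
    (hl : l3 ≤ l2 ∧ l2 ≤ l1) (hlsum : l1 + l2 + l3 = p + q + r)
    (hm : m3 ≤ m2 ∧ m2 ≤ m1) (hmsum : m1 + m2 + m3 = p)
    (hn : n3 ≤ n2 ∧ n2 ≤ n1) (hnsum : n1 + n2 + n3 = q)
    (hz : z3 ≤ z2 ∧ z2 ≤ z1) (hzsum : z1 + z2 + z3 = r)
    (hmsub : m1 ≤ l1 ∧ m2 ≤ l2 ∧ m3 ≤ l3)
    (hnsub : n1 ≤ l1 ∧ n2 ≤ l2 ∧ n3 ≤ l3)
    (hzsub : z1 ≤ l1 ∧ z2 ≤ l2 ∧ z3 ≤ l3) :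
    2 * (((p + q + r : ℕ) : ℤ) * ((p : ℤ) + q) - (p : ℤ) ^ 2 - (p : ℤ) * q - (q : ℤ) ^ 2)
        - 2 * S3 l1 l2 l3 + S3 m1 m2 m3 + S3 n1 n2 n3 + S3 z1 z2 z3 ≤
      2 * ((p + q + r : ℕ) : ℤ) * (2 + (p : ℤ) + q)
        - 2 * ((p : ℤ) ^ 2 + q + (q : ℤ) ^ 2 + (p : ℤ) * (2 + q)) :=
  Xi_max_d3_general p q r hr hqr l1 l2 l3 m1 m2 m3 n1 n2 n3 z1 z2 z3 hl hlsum hm hmsum hn hnsum hz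
    hzsum hmsub hnsub
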